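/- arXiv:1212.2319 — 6 statements merged into one kernel-verified Lean document; each statement's English description precedes it below -/
import Mathlib

section
/- Let K be a commutative ℚ-algebra and let t = (t₁, t₂, t₃, …) be a sequence in K. Then in the formal power series ring K⟦k⟧ one has the identity log(1 + Σ_{i≥1} t_i k^i) = Σ_{j≥1} h_j(t) k^j; equivalently, 1 + Σ_{i≥1} t_i k^i = exp(Σ_{j≥1} h_j(t) k^j), where for each j ≥ 1, h_j(t) = Σ_{‖α‖=j} (−1)^{|α|−1} (|α|−1)! · t^α / α!, the sum running over finitely supported multi-indices α = (α₁, α₂, …) of nonnegative integers with ‖α‖ := Σ_i i·α_i = j. -/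
open Finset

/-!
`G = Σ_{j≥1} h_j(t) X^j` is Mathlib's `logOf F = log(1 + X) ∘ (F - 1)`: expanding `(F - 1)^m`
by the multinomial theorem, `t^α` with `|α| = m` enters with coefficient
`(-1)^(m+1)/m · m!/α! = (-1)^(m-1) (m-1)!/α!`. And `exp ∘ logOf F = F`, because both sides
solve `y' = y · (logOf F)'` (as `(1 + X) · log' = 1`) with `y(0) = 1`, and over a `ℚ`-algebra
such a solution is determined by its constant term.
-/

/-- `hpoly j t` is `h_j(t) = Σ_{‖α‖=j} (−1)^{|α|−1}(|α|−1)! t^α/α!`, the sum running over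
finitely supported multi-indices `α = (α₁, α₂, …)` with `‖α‖ = Σ_i i·α_i = j`.
Any such multi-index satisfies `α_i ≤ j` and `α_i = 0` for `i > j`, so it is faithfully
encoded as a function `Fin j → ℕ` (index `i : Fin j` corresponding to `α_{i+1}`) with
values in `{0, …, j}`. Here `t : ℕ → K` with `t i` playing the role of `t_i` for `i ≥ 1`. -/
noncomputable def hpoly {K : Type*} [CommRing K] [Algebra ℚ K] (j : ℕ) (t : ℕ → K) : K :=
  ∑ α ∈ (Fintype.piFinset fun _ : Fin j => Finset.range (j + 1)).filter
      (fun α => ∑ i, (i.1 + 1) * α i = j),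
    ((-1 : ℚ) ^ ((∑ i, α i) - 1) * ((∑ i, α i) - 1).factorial / ∏ i, (α i).factorial) •
      ∏ i, t (i.1 + 1) ^ α i

open Nat in
theorem Nat.neg_one_pow_div_mul_multinomial {ι : Type*} (s : Finset ι) (k : ι → ℕ)
    (hk : ∑ i ∈ s, k i ≠ 0) :
    (-1 : ℚ) ^ (∑ i ∈ s, k i + 1) / (∑ i ∈ s, k i : ℕ) * multinomial s k =
      (-1) ^ (∑ i ∈ s, k i - 1) * (∑ i ∈ s, k i - 1)! / ∏ i ∈ s, (k i)! := by
  obtain ⟨m, hm⟩ : ∃ m, ∑ i ∈ s, k i = m + 1 := ⟨_, (Nat.succ_pred_eq_of_ne_zero hk).symm⟩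
  have hspec : (∏ i ∈ s, ((k i)! : ℚ)) * multinomial s k = (m + 1) * m ! := by
    exact_mod_cast (multinomial_spec s k).trans (by rw [hm, factorial_succ])
  have hprod : (∏ i ∈ s, ((k i)! : ℚ)) ≠ 0 := prod_ne_zero_iff.mpr fun i _ => by positivity
  rw [hm, Nat.add_sub_cancel, pow_succ, pow_succ]
  field_simp
  push_cast
  linear_combination hspec

namespace PowerSeries

open scoped Nat

variable {R : Type*}

theorem coeff_pow_eq_of_coeff_eq [CommSemiring R] {f g : R⟦X⟧} {n : ℕ}
    (h : ∀ i ≤ n, coeff i f = coeff i g) (m : ℕ) : coeff n (f ^ m) = coeff n (g ^ m) := by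
  have htrunc : trunc (n + 1) f = trunc (n + 1) g := by
    ext i
    simp only [coeff_trunc]
    split_ifs with hi
    exacts [h i (by omega), rfl]
  have := congrArg (Polynomial.coeff · n)
    (by rw [← trunc_trunc_pow, htrunc, trunc_trunc_pow] :
      trunc (n + 1) (f ^ m) = trunc (n + 1) (g ^ m))
  simpa [coeff_trunc] using this

theorem coeff_sum_C_mul_X_pow_pow [CommSemiring R] {ι : Type*} [DecidableEq ι] (s : Finset ι)
    (c : ι → R) (e : ι → ℕ) (m n : ℕ) :
    coeff n ((∑ i ∈ s, C (c i) * X ^ e i) ^ m) =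
      ∑ k ∈ s.piAntidiag m with ∑ i ∈ s, e i * k i = n,
        (Nat.multinomial s k : R) * ∏ i ∈ s, c i ^ k i := by
  rw [sum_pow_eq_sum_piAntidiag, map_sum, sum_filter]
  refine sum_congr rfl fun k _ => ?_
  have hmono : ∏ i ∈ s, (C (c i) * X ^ e i) ^ k i =
      C (∏ i ∈ s, c i ^ k i) * X ^ ∑ i ∈ s, e i * k i := by
    simp only [mul_pow, prod_mul_distrib, ← pow_mul, prod_pow_eq_pow_sum, map_prod, map_pow]
  rw [hmono, ← map_natCast (C (R := R)), ← mul_assoc, ← map_mul, coeff_C_mul_X_pow]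
  exact if_congr eq_comm rfl rfl

theorem coeff_subst_eq_sum_range [CommRing R] {g : R⟦X⟧} (hg : constantCoeff g = 0)
    (f : R⟦X⟧) (n : ℕ) :
    coeff n (f.subst g) = ∑ d ∈ range (n + 1), coeff d f * coeff n (g ^ d) := by
  rw [coeff_subst' (.of_constantCoeff_zero' hg)]
  refine finsum_eq_sum_of_support_subset _ fun d hd => ?_
  by_contra h
  simp only [coe_range, Set.mem_Iio, not_lt] at h
  have hpow : coeff n (g ^ d) = 0 :=
    X_pow_dvd_iff.mp (pow_dvd_pow_of_dvd (X_dvd_iff.mpr hg) d) n (by omega)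
  exact hd (show coeff d f • coeff n (g ^ d) = 0 by rw [hpow, smul_zero])

theorem eq_of_derivative_eq_mul [CommRing R] [IsAddTorsionFree R] {f g h : R⟦X⟧}
    (hf : d⁄dX R f = f * h) (hg : d⁄dX R g = g * h) (h0 : constantCoeff f = constantCoeff g) :
    f = g := by
  ext n
  induction n using Nat.strong_induction_on with
  | _ n ih =>
    cases n with
    | zero => simpa using h0
    | succ n =>
      have hf' := congrArg (coeff n) hf
      have hg' := congrArg (coeff n) hg
      rw [coeff_derivative] at hf' hg'
      have key : coeff (n + 1) f * (n + 1) = coeff (n + 1) g * (n + 1) := by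
        rw [hf', hg', coeff_mul, coeff_mul]
        refine sum_congr rfl fun p hp => ?_
        rw [ih p.1 (by have := mem_antidiagonal.mp hp; omega)]
      rw [← Nat.cast_succ, mul_comm, ← nsmul_eq_mul, mul_comm, ← nsmul_eq_mul] at key
      exact (smul_right_inj (Nat.succ_ne_zero n)).mp key

variable {A : Type*} [CommRing A] [Algebra ℚ A]

theorem coeff_exp_subst {g : A⟦X⟧} (hg : constantCoeff g = 0) (n : ℕ) :
    coeff n ((exp A).subst g) = ∑ k ∈ range (n + 1), ((k ! : ℚ)⁻¹) • coeff n (g ^ k) := by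
  rw [coeff_subst_eq_sum_range hg]
  refine sum_congr rfl fun k _ => ?_
  rw [coeff_exp, one_div, Algebra.smul_def]

theorem constantCoeff_exp_subst {g : A⟦X⟧} (hg : constantCoeff g = 0) :
    constantCoeff ((exp A).subst g) = 1 := by
  rw [← coeff_zero_eq_constantCoeff_apply, coeff_exp_subst hg 0]
  simp

theorem derivative_exp_subst {g : A⟦X⟧} (hg : constantCoeff g = 0) :
    d⁄dX A ((exp A).subst g) = (exp A).subst g * d⁄dX A g := by
  rw [derivative_subst (.of_constantCoeff_zero' hg), derivative_exp]

theorem one_add_X_mul_derivative_log : (1 + X) * d⁄dX A (log A) = 1 := by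
  ext n
  rw [deriv_log]
  cases n with
  | zero => simp
  | succ n => simp [add_mul, coeff_succ_X_mul, pow_succ]

theorem mul_derivative_logOf {f : A⟦X⟧} (hf : constantCoeff f = 1) :
    f * d⁄dX A (logOf f) = d⁄dX A f := by
  have hs : HasSubst (f - 1) := .of_constantCoeff_zero' (by simp [hf])
  have hinv : f * (d⁄dX A (log A)).subst (f - 1) = 1 := by
    have hf1 : (1 + X : A⟦X⟧).subst (f - 1) = f := by
      rw [← coe_substAlgHom hs, map_add, map_one, coe_substAlgHom, subst_X hs]
      ring
    rw [← congrArg (· * _) hf1, ← subst_mul hs, one_add_X_mul_derivative_log,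
      ← coe_substAlgHom hs, map_one]
  rw [logOf, derivative_subst hs, ← mul_assoc, hinv, one_mul, map_sub, Derivation.map_one_eq_zero,
    sub_zero]

theorem exp_subst_logOf {f : A⟦X⟧} (hf : constantCoeff f = 1) : (exp A).subst (logOf f) = f :=
  haveI := IsAddTorsionFree.of_module_rat A
  eq_of_derivative_eq_mul (derivative_exp_subst (constantCoeff_logOf hf))
    (mul_derivative_logOf hf).symm (by rw [constantCoeff_exp_subst (constantCoeff_logOf hf), hf])

end PowerSeries

open PowerSeries

theorem Fin.sum_le_sum_succ_mul {j : ℕ} (α : Fin j → ℕ) :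
    ∑ i, α i ≤ ∑ i : Fin j, (i.1 + 1) * α i :=
  sum_le_sum fun i _ => Nat.le_mul_of_pos_left _ i.1.succ_pos

/-- In degree `j` only `t₁, …, tⱼ` matter, so `F - 1` may be replaced by the polynomial
`Σ_{i : Fin j} t_{i+1} X^{i+1}`, whose multinomial expansion is indexed as in `hpoly`. -/
theorem coeff_pow_sub_one_eq_sum_piAntidiag {R : Type*} [CommRing R] (t : ℕ → R) (j m : ℕ) :
    coeff j (((mk fun n => if n = 0 then 1 else t n) - 1) ^ m) =
      ∑ α ∈ (univ : Finset (Fin j)).piAntidiag m with ∑ i : Fin j, (i.1 + 1) * α i = j,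
        (Nat.multinomial univ α : R) * ∏ i, t (i.1 + 1) ^ α i := by
  rw [← coeff_sum_C_mul_X_pow_pow]
  refine coeff_pow_eq_of_coeff_eq (fun i hi => ?_) m
  rcases i with _ | i
  · simp
  · simp [coeff_X_pow, Fin.sum_univ_eq_sum_range (fun l => if i = l then t (l + 1) else 0),
      show i < j by omega]

theorem coeff_logOf_eq_hpoly {K : Type*} [CommRing K] [Algebra ℚ K] (t : ℕ → K) {j : ℕ}
    (hj : j ≠ 0) :
    coeff j (logOf (mk fun n => if n = 0 then 1 else t n)) = hpoly j t := by
  have hu0 : constantCoeff ((mk fun n => if n = 0 then 1 else t n) - 1 : K⟦X⟧) = 0 := by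
    rw [map_sub, map_one, ← coeff_zero_eq_constantCoeff_apply, coeff_mk, if_pos rfl, sub_self]
  rw [logOf, coeff_subst_eq_sum_range hu0, hpoly,
    ← sum_fiberwise_of_maps_to (g := fun α => ∑ i, α i) (t := range (j + 1))
      fun α hα => mem_range.mpr (Nat.lt_succ_of_le ((Fin.sum_le_sum_succ_mul α).trans
        (mem_filter.mp hα).2.le))]
  refine sum_congr rfl fun m _ => ?_
  have hfiber : {α ∈ (univ : Finset (Fin j)).piAntidiag m | ∑ i : Fin j, (i.1 + 1) * α i = j} =
      {α ∈ {α ∈ Fintype.piFinset fun _ : Fin j => range (j + 1) |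
        ∑ i : Fin j, (i.1 + 1) * α i = j} | ∑ i, α i = m} := by
    ext α
    simp only [mem_filter, mem_piAntidiag, Fintype.mem_piFinset, mem_range, mem_univ]
    constructor
    · rintro ⟨⟨hm, -⟩, hw⟩
      refine ⟨⟨fun a => Nat.lt_succ_of_le ?_, hw⟩, hm⟩
      calc α a ≤ ∑ i, α i := single_le_sum (fun _ _ => Nat.zero_le _) (mem_univ a)
        _ ≤ j := (Fin.sum_le_sum_succ_mul α).trans hw.le
    · rintro ⟨⟨-, hw⟩, hm⟩
      exact ⟨⟨hm, fun _ _ => trivial⟩, hw⟩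
  rw [coeff_pow_sub_one_eq_sum_piAntidiag, mul_sum, hfiber]
  refine sum_congr rfl fun α hα => ?_
  simp only [mem_filter] at hα
  obtain ⟨⟨-, hw⟩, hm⟩ := hα
  subst hm
  have hm0 : ∑ i, α i ≠ 0 := fun h0 => hj <| by
    rw [← hw, sum_eq_zero fun i _ => by rw [(sum_eq_zero_iff.mp h0) i (mem_univ i), mul_zero]]
  rw [coeff_log, if_neg hm0, ← Nat.neg_one_pow_div_mul_multinomial univ α hm0, Algebra.smul_def,
    map_mul, map_natCast, mul_assoc]

/-- Let `K` be a commutative `ℚ`-algebra and `t = (t₁, t₂, …)` a sequence in `K`. Then in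
`K⟦k⟧` one has `1 + Σ_{i≥1} t_i k^i = exp(Σ_{j≥1} h_j(t) k^j)`, i.e.
`log(1 + Σ_{i≥1} t_i k^i) = Σ_{j≥1} h_j(t) k^j`. Since `G := Σ_{j≥1} h_j(t) k^j` has zero
constant term, `exp G = Σ_{k≥0} G^k / k!` is well defined coefficientwise: its `n`-th
coefficient is `Σ_{k=0}^{n} (1/k!) • coeff n (G^k)`, which is how the identity is stated. -/
theorem statement0 {K : Type*} [CommRing K] [Algebra ℚ K] (t : ℕ → K)
    (F G : PowerSeries K)
    (hF : F = PowerSeries.mk fun n => if n = 0 then 1 else t n)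
    (hG : G = PowerSeries.mk fun n => if n = 0 then 0 else hpoly n t) :
    ∀ n : ℕ, PowerSeries.coeff n F =
      ∑ k ∈ Finset.range (n + 1),
        ((k.factorial : ℚ)⁻¹) • PowerSeries.coeff n (G ^ k) := by
  have hF1 : constantCoeff F = 1 := by
    rw [hF, ← coeff_zero_eq_constantCoeff_apply, coeff_mk, if_pos rfl]
  have hGF : G = logOf F := by
    ext j
    rcases eq_or_ne j 0 with rfl | hj
    · rw [hG, coeff_mk, if_pos rfl, coeff_zero_eq_constantCoeff_apply, constantCoeff_logOf hF1]
    · rw [hG, hF, coeff_mk, if_neg hj, coeff_logOf_eq_hpoly t hj]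
  intro n
  rw [hGF, ← coeff_exp_subst (constantCoeff_logOf hF1), exp_subst_logOf hF1]
end

section
/- Let K be a field of characteristic zero and let A, B, C : ℤ → K with B(n) ≠ 0 for all n. Define ρ(n) = −C(n)/B(n), θ₀(n) = 1, and recursively θ_{j+1}(n) = −(A(n)ρ(n+1)/B(n)) · Σ_{i=0}^{j} θ_i(n+1)θ_{j−i}(n) for j ≥ 0. Then for every n, the formal power series θ(n) := ε·ρ(n)·(1 + Σ_{j≥1} θ_j(n) ε^j) ∈ K⟦ε⟧ satisfies the discrete Riccati equation A(n)·θ(n+1)·θ(n) + B(n)·θ(n) + ε·C(n) = 0 in K⟦ε⟧. -/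
/-! Write `θ(n) = ε ρ(n) T(n)` with `T(n) = Σ_j θ_j(n) ε^j`. The recursion for the `θ_j` says
exactly that `B(n) (T(n) - 1) = -A(n) ρ(n+1) ε T(n+1) T(n)`, and `B(n) ρ(n) = -C(n)` takes care of
the remaining term, so the Riccati equation is a linear combination of these two identities. -/

namespace PowerSeries

variable {R : Type*} [CommRing R]

theorem mk_ite_zero_eq_X_mul (f : ℕ → R) :
    mk (fun k => if k = 0 then 0 else f (k - 1)) = X * mk f := by
  ext (_ | k) <;> simp [coeff_succ_X_mul]

theorem coeff_mk_mul_mk (f g : ℕ → R) (j : ℕ) :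
    coeff j (mk f * mk g) = ∑ i ∈ Finset.range (j + 1), f i * g (j - i) := by
  simp only [coeff_mul, coeff_mk,
    Finset.Nat.sum_antidiagonal_eq_sum_range_succ (fun i k => f i * g k)]

theorem C_mul_mk_sub_one_of_recursion (T S : ℕ → R) (a b : R) (h0 : T 0 = 1)
    (h : ∀ j, b * T (j + 1) = a * ∑ i ∈ Finset.range (j + 1), S i * T (j - i)) :
    C b * (mk T - 1) = C a * X * (mk S * mk T) := by
  ext (_ | j)
  · simp [h0]
  · rw [mul_comm (C a), mul_assoc, coeff_succ_X_mul, coeff_C_mul, coeff_C_mul, coeff_mk_mul_mk,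
      map_sub, coeff_mk, coeff_one, if_neg j.succ_ne_zero, sub_zero, h]

end PowerSeries

open PowerSeries

theorem statement2_general {K : Type*} [Field K]
    (A B C : ℤ → K) (hB : ∀ n, B n ≠ 0)
    (ρ : ℤ → K) (hρ : ∀ n, ρ n = -C n / B n)
    (θ : ℕ → ℤ → K) (hθ0 : ∀ n, θ 0 n = 1)
    (hθ : ∀ (j : ℕ) (n : ℤ), θ (j + 1) n =
      -(A n * ρ (n + 1) / B n) * ∑ i ∈ Finset.range (j + 1), θ i (n + 1) * θ (j - i) n)
    (Θ : ℤ → PowerSeries K)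
    (hΘ : ∀ n, Θ n = PowerSeries.mk fun k => if k = 0 then 0 else ρ n * θ (k - 1) n) :
    ∀ n : ℤ, PowerSeries.C (R := K) (A n) * Θ (n + 1) * Θ n + PowerSeries.C (R := K) (B n) * Θ n
      + PowerSeries.X * PowerSeries.C (R := K) (C n) = 0 := by
  intro n
  set T : ℤ → PowerSeries K := fun m => mk fun j => θ j m
  have hΘT : ∀ m, Θ m = PowerSeries.C (ρ m) * X * T m := fun m => by
    rw [hΘ, mk_ite_zero_eq_X_mul (fun k => ρ m * θ k m), mul_comm (PowerSeries.C _), mul_assoc]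
    congr 1
    ext k
    simp [T, coeff_C_mul]
  have hrec : PowerSeries.C (B n) * (T n - 1)
      = PowerSeries.C (-(A n * ρ (n + 1))) * X * (T (n + 1) * T n) :=
    C_mul_mk_sub_one_of_recursion (θ · n) (θ · (n + 1)) _ _ (hθ0 n) fun j => by
      rw [hθ]; field_simp [hB n]
  have hconst :
      PowerSeries.C (B n) * PowerSeries.C (ρ n) + PowerSeries.C (C n) = (0 : PowerSeries K) := by
    rw [← map_mul, ← map_add, hρ, mul_div_cancel₀ _ (hB n), neg_add_cancel, map_zero]
  rw [map_neg, map_mul] at hrec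
  rw [hΘT, hΘT]
  linear_combination (X * PowerSeries.C (ρ n)) * hrec + X * hconst

/-- Let `K` be a field of characteristic zero, `A, B, C : ℤ → K` with `B` nowhere zero.
With `ρ(n) = −C(n)/B(n)`, `θ₀(n) = 1` and
`θ_{j+1}(n) = −(A(n)ρ(n+1)/B(n)) Σ_{i=0}^{j} θ_i(n+1)θ_{j−i}(n)`,
the formal power series `θ(n) = ε·ρ(n)·(1 + Σ_{j≥1} θ_j(n) ε^j) ∈ K⟦ε⟧` satisfies the
discrete Riccati equation `A(n)·θ(n+1)·θ(n) + B(n)·θ(n) + ε·C(n) = 0` for every `n`. -/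
theorem statement2 {K : Type*} [Field K] [CharZero K]
    (A B C : ℤ → K) (hB : ∀ n, B n ≠ 0)
    (ρ : ℤ → K) (hρ : ∀ n, ρ n = -C n / B n)
    (θ : ℕ → ℤ → K) (hθ0 : ∀ n, θ 0 n = 1)
    (hθ : ∀ (j : ℕ) (n : ℤ), θ (j + 1) n =
      -(A n * ρ (n + 1) / B n) * ∑ i ∈ Finset.range (j + 1), θ i (n + 1) * θ (j - i) n)
    (Θ : ℤ → PowerSeries K)
    (hΘ : ∀ n, Θ n = PowerSeries.mk fun k => if k = 0 then 0 else ρ n * θ (k - 1) n) :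
    ∀ n : ℤ, PowerSeries.C (R := K) (A n) * Θ (n + 1) * Θ n + PowerSeries.C (R := K) (B n) * Θ n
      + PowerSeries.X * PowerSeries.C (R := K) (C n) = 0 :=
  statement2_general A B C hB ρ hρ θ hθ0 hθ Θ hΘ
end

section
/- Let K be a field, p, q, α, β ∈ K, and let u : ℤ×ℤ → K satisfy the NQC equation [(p−α)u−(p+β)ũ][(p−β)û−(p+α)ũ̂] − [(q−α)u−(q+β)û][(q−β)ũ−(q+α)ũ̂] = 0 at every (n,m). Set P₊ = (p+α)(p+β), P₋ = (p−α)(p−β), Q₊ = (q+α)(q+β), γ₁ = 1/((α−p)u + (β+p)ũ), γ₂ = 1/((α−q)u + (β+q)û), F := γ₁·[(α²+β²−2p²)uũ + P₋u² + P₊ũ²]/(P₋u − P₊ũ̃), J := γ₂·[P₊ũ − Q₊û + (q²−p²)u], and assume all the denominators (α−p)u+(β+p)ũ, (α−q)u+(β+q)û, P₋u − P₊ũ̃ as well as F and J are nowhere zero. Then the conservation law Δ_m ln F = Δ_n ln J holds in the multiplicative sense: F(n,m+1)·J(n,m) = F(n,m)·J(n+1,m) for all (n,m). -/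
/-!
Cancelling `γ₁` against a factor of its numerator gives `F = N / D` with
`N = (β−p)u + (α+p)ũ` and `D = P₋u − P₊ũ̃`. The NQC polynomial is affine in `ũ̂`, and at `(n,m)`
it says exactly that `J·N̂ = E` with `E = (α+p)(β−q)ũ − (α+q)(β−p)û`, so `F̂·J = E / D̂`.
Writing `J̃ = M̃ / L̃`, what remains is `E·D·L̃ = N·M̃·D̂`: the NQC equation at `(n+1,m)` eliminates
`ũ̃̂` from `D̂`, and the equation at `(n,m)` once more does the rest.
-/

namespace NQC

section CommRing

variable {R : Type*} [CommRing R] (p q α β : R)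

-- `uᵢⱼ` stands for `u (n + i) (m + j)`.
def quad (u₀₀ u₁₀ u₀₁ u₁₁ : R) : R :=
  ((p - α) * u₀₀ - (p + β) * u₁₀) * ((p - β) * u₀₁ - (p + α) * u₁₁)
    - ((q - α) * u₀₀ - (q + β) * u₀₁) * ((q - β) * u₁₀ - (q + α) * u₁₁)

theorem F_numerator_factor (x y : R) :
    (α ^ 2 + β ^ 2 - 2 * p ^ 2) * x * y + (p - α) * (p - β) * x ^ 2
      + (p + α) * (p + β) * y ^ 2
      = ((α - p) * x + (β + p) * y) * ((β - p) * x + (α + p) * y) := by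
  ring

theorem J_numerator_mul_sub_eq (u₀₀ u₁₀ u₀₁ u₁₁ : R) :
    ((p + α) * (p + β) * u₁₀ - (q + α) * (q + β) * u₀₁ + (q ^ 2 - p ^ 2) * u₀₀)
        * ((β - p) * u₀₁ + (α + p) * u₁₁)
      - ((α - q) * u₀₀ + (β + q) * u₀₁)
        * ((α + p) * (β - q) * u₁₀ - (α + q) * (β - p) * u₀₁)
      = (α + p) * quad p q α β u₀₀ u₁₀ u₀₁ u₁₁ := by
  unfold quad; ring

theorem conservation_identity (u₀₀ u₁₀ u₂₀ u₀₁ u₁₁ u₂₁ : R) :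
    ((α + p) * (β - q) * u₁₀ - (α + q) * (β - p) * u₀₁)
        * ((p - α) * (p - β) * u₀₀ - (p + α) * (p + β) * u₂₀)
        * ((α - q) * u₁₀ + (β + q) * u₁₁)
      - ((β - p) * u₀₀ + (α + p) * u₁₀)
        * ((p + α) * (p + β) * u₂₀ - (q + α) * (q + β) * u₁₁ + (q ^ 2 - p ^ 2) * u₁₀)
        * ((p - α) * (p - β) * u₀₁ - (p + α) * (p + β) * u₂₁)
      = (p + α) * (p - β) * ((α - p) * u₁₀ + (β + p) * u₂₀) * quad p q α β u₀₀ u₁₀ u₀₁ u₁₁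
        + (p + α) * (p + β) * ((β - p) * u₀₀ + (α + p) * u₁₀)
          * quad p q α β u₁₀ u₂₀ u₁₁ u₂₁ := by
  unfold quad; ring

end CommRing

section Field

variable {K : Type*} [Field K] (p q α β : K)

theorem F_eq_div (x y z : K) (h : (α - p) * x + (β + p) * y ≠ 0) :
    1 / ((α - p) * x + (β + p) * y) *
        ((α ^ 2 + β ^ 2 - 2 * p ^ 2) * x * y + (p - α) * (p - β) * x ^ 2
          + (p + α) * (p + β) * y ^ 2) / ((p - α) * (p - β) * x - (p + α) * (p + β) * z)
      = ((β - p) * x + (α + p) * y) / ((p - α) * (p - β) * x - (p + α) * (p + β) * z) := by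
  rw [F_numerator_factor, ← mul_assoc, one_div_mul_cancel h, one_mul]

theorem J_mul_eq_of_quad_eq_zero (u₀₀ u₁₀ u₀₁ u₁₁ : K)
    (hL : (α - q) * u₀₀ + (β + q) * u₀₁ ≠ 0) (hquad : quad p q α β u₀₀ u₁₀ u₀₁ u₁₁ = 0) :
    1 / ((α - q) * u₀₀ + (β + q) * u₀₁) *
        ((p + α) * (p + β) * u₁₀ - (q + α) * (q + β) * u₀₁ + (q ^ 2 - p ^ 2) * u₀₀)
        * ((β - p) * u₀₁ + (α + p) * u₁₁)
      = (α + p) * (β - q) * u₁₀ - (α + q) * (β - p) * u₀₁ := by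
  rw [one_div_mul_eq_div, div_mul_eq_mul_div, div_eq_iff hL]
  linear_combination J_numerator_mul_sub_eq p q α β u₀₀ u₁₀ u₀₁ u₁₁ + (α + p) * hquad

theorem conservation_of_quad_eq_zero (u₀₀ u₁₀ u₂₀ u₀₁ u₁₁ u₂₁ : K)
    (hD₀ : (p - α) * (p - β) * u₀₀ - (p + α) * (p + β) * u₂₀ ≠ 0)
    (hD₁ : (p - α) * (p - β) * u₀₁ - (p + α) * (p + β) * u₂₁ ≠ 0)
    (hL : (α - q) * u₁₀ + (β + q) * u₁₁ ≠ 0)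
    (hquad₀ : quad p q α β u₀₀ u₁₀ u₀₁ u₁₁ = 0) (hquad₁ : quad p q α β u₁₀ u₂₀ u₁₁ u₂₁ = 0) :
    ((α + p) * (β - q) * u₁₀ - (α + q) * (β - p) * u₀₁)
        / ((p - α) * (p - β) * u₀₁ - (p + α) * (p + β) * u₂₁)
      = ((β - p) * u₀₀ + (α + p) * u₁₀) / ((p - α) * (p - β) * u₀₀ - (p + α) * (p + β) * u₂₀)
        * (1 / ((α - q) * u₁₀ + (β + q) * u₁₁) *
          ((p + α) * (p + β) * u₂₀ - (q + α) * (q + β) * u₁₁ + (q ^ 2 - p ^ 2) * u₁₀)) := by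
  rw [one_div_mul_eq_div, div_mul_div_comm, div_eq_div_iff hD₁ (mul_ne_zero hD₀ hL)]
  linear_combination conservation_identity p q α β u₀₀ u₁₀ u₂₀ u₀₁ u₁₁ u₂₁
    + (p + α) * (p - β) * ((α - p) * u₁₀ + (β + p) * u₂₀) * hquad₀
    + (p + α) * (p + β) * ((β - p) * u₀₀ + (α + p) * u₁₀) * hquad₁

end Field

end NQC

theorem statement12_general {K : Type*} [Field K] (p q α β : K)
    (u : ℤ → ℤ → K)
    (hNQC : ∀ n m : ℤ,
      ((p - α) * u n m - (p + β) * u (n + 1) m) *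
        ((p - β) * u n (m + 1) - (p + α) * u (n + 1) (m + 1))
      - ((q - α) * u n m - (q + β) * u n (m + 1)) *
        ((q - β) * u (n + 1) m - (q + α) * u (n + 1) (m + 1)) = 0)
    (Pp Pm Qp : K)
    (hPp : Pp = (p + α) * (p + β)) (hPm : Pm = (p - α) * (p - β))
    (hQp : Qp = (q + α) * (q + β))
    (γ₁ γ₂ : ℤ → ℤ → K)
    (hγ₁ : ∀ n m, γ₁ n m = 1 / ((α - p) * u n m + (β + p) * u (n + 1) m))
    (hγ₂ : ∀ n m, γ₂ n m = 1 / ((α - q) * u n m + (β + q) * u n (m + 1)))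
    (F J : ℤ → ℤ → K)
    (hF : ∀ n m, F n m = γ₁ n m *
      ((α ^ 2 + β ^ 2 - 2 * p ^ 2) * u n m * u (n + 1) m
        + Pm * u n m ^ 2 + Pp * u (n + 1) m ^ 2) /
      (Pm * u n m - Pp * u (n + 2) m))
    (hJ : ∀ n m, J n m = γ₂ n m *
      (Pp * u (n + 1) m - Qp * u n (m + 1) + (q ^ 2 - p ^ 2) * u n m))
    (hd1 : ∀ n m, (α - p) * u n m + (β + p) * u (n + 1) m ≠ 0)
    (hd2 : ∀ n m, (α - q) * u n m + (β + q) * u n (m + 1) ≠ 0)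
    (hd3 : ∀ n m, Pm * u n m - Pp * u (n + 2) m ≠ 0) :
    ∀ n m : ℤ, F n (m + 1) * J n m = F n m * J (n + 1) m := by
  subst hPp hPm hQp
  have hF' : ∀ n m, F n m = ((β - p) * u n m + (α + p) * u (n + 1) m) /
      ((p - α) * (p - β) * u n m - (p + α) * (p + β) * u (n + 2) m) := fun n m => by
    rw [hF, hγ₁, NQC.F_eq_div p α β _ _ _ (hd1 n m)]
  intro n m
  have hNQC₁ := hNQC (n + 1) m
  rw [show n + 1 + 1 = n + 2 by ring] at hNQC₁
  calc F n (m + 1) * J n m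
      = ((α + p) * (β - q) * u (n + 1) m - (α + q) * (β - p) * u n (m + 1)) /
          ((p - α) * (p - β) * u n (m + 1) - (p + α) * (p + β) * u (n + 2) (m + 1)) := by
        rw [hF', hJ, hγ₂, div_mul_eq_mul_div, mul_comm,
          NQC.J_mul_eq_of_quad_eq_zero p q α β _ _ _ _ (hd2 n m) (hNQC n m)]
    _ = F n m * J (n + 1) m := by
        rw [hF', hJ, hγ₂, show n + 1 + 1 = n + 2 by ring]
        exact NQC.conservation_of_quad_eq_zero p q α β _ _ _ _ _ _ (hd3 n m) (hd3 n (m + 1))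
          (hd2 (n + 1) m) (hNQC n m) hNQC₁

/-- First conservation law of the NQC equation, in multiplicative form: with
`γ₁ = 1/((α−p)u + (β+p)ũ)`, `γ₂ = 1/((α−q)u + (β+q)û)`,
`F = γ₁[(α²+β²−2p²)uũ + P₋u² + P₊ũ²]/(P₋u − P₊ũ̃)` and
`J = γ₂[P₊ũ − Q₊û + (q²−p²)u]`, one has `F̂·J = F·J̃`, i.e. `Δ_m ln F = Δ_n ln J`. -/
theorem statement12 {K : Type*} [Field K] (p q α β : K)
    (u : ℤ → ℤ → K)
    (hNQC : ∀ n m : ℤ,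
      ((p - α) * u n m - (p + β) * u (n + 1) m) *
        ((p - β) * u n (m + 1) - (p + α) * u (n + 1) (m + 1))
      - ((q - α) * u n m - (q + β) * u n (m + 1)) *
        ((q - β) * u (n + 1) m - (q + α) * u (n + 1) (m + 1)) = 0)
    (Pp Pm Qp : K)
    (hPp : Pp = (p + α) * (p + β)) (hPm : Pm = (p - α) * (p - β))
    (hQp : Qp = (q + α) * (q + β))
    (γ₁ γ₂ : ℤ → ℤ → K)
    (hγ₁ : ∀ n m, γ₁ n m = 1 / ((α - p) * u n m + (β + p) * u (n + 1) m))
    (hγ₂ : ∀ n m, γ₂ n m = 1 / ((α - q) * u n m + (β + q) * u n (m + 1)))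
    (F J : ℤ → ℤ → K)
    (hF : ∀ n m, F n m = γ₁ n m *
      ((α ^ 2 + β ^ 2 - 2 * p ^ 2) * u n m * u (n + 1) m
        + Pm * u n m ^ 2 + Pp * u (n + 1) m ^ 2) /
      (Pm * u n m - Pp * u (n + 2) m))
    (hJ : ∀ n m, J n m = γ₂ n m *
      (Pp * u (n + 1) m - Qp * u n (m + 1) + (q ^ 2 - p ^ 2) * u n m))
    (hd1 : ∀ n m, (α - p) * u n m + (β + p) * u (n + 1) m ≠ 0)
    (hd2 : ∀ n m, (α - q) * u n m + (β + q) * u n (m + 1) ≠ 0)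
    (hd3 : ∀ n m, Pm * u n m - Pp * u (n + 2) m ≠ 0)
    (hFne : ∀ n m, F n m ≠ 0) (hJne : ∀ n m, J n m ≠ 0) :
    ∀ n m : ℤ, F n (m + 1) * J n m = F n m * J (n + 1) m :=
  statement12_general p q α β u hNQC Pp Pm Qp hPp hPm hQp γ₁ γ₂ hγ₁ hγ₂ F J hF hJ hd1 hd2 hd3
end

section
/- Let K be a field, p, q ∈ K, and let x, y, z : ℤ×ℤ → K satisfy the discrete Boussinesq system z̃ − xx̃ + y = 0, ẑ − xx̂ + y = 0, (x̂ − x̃)(z − x·x̃̂ + ỹ̂) − p + q = 0 at every (n,m). Assume x·x̃̃ − ỹ̃ − z and x̃ − x̂ are nowhere zero. Then at every (n,m): Δ_m[ (x̃̃̃ − x) / ((x·x̃̃ − ỹ̃ − z)(x̃·x̃̃̃ − ỹ̃̃ − z̃)) ] = Δ_n[ 1 / ((x̃ − x̂)(x·x̃̃ − ỹ̃ − z)) ]. -/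
/-!
Write `ω = x̃ − x̂` and `D = x·x̃̃ − ỹ̃ − z`. Eliminating `z` and `y` between the three lattice
equations gives `ω·D = ω̃·D̂ = N` with `N = ω·ω̃·(x − x̂̃̃) + p − q`, a quantity in `x` alone.
Hence `J = 1/N`, `F = (x̃̃̃ − x)·ω·ω̃ / (N·Ñ)` and `F̂ = (x̂̃̃̃ − x̂)·ω̃·ω̃̃ / (N·Ñ)`, and after
multiplying by `N·Ñ` the conservation law becomes the polynomial identity
`N − Ñ = (x̂̃̃̃ − x̂)·ω̃·ω̃̃ − (x̃̃̃ − x)·ω·ω̃`.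
-/

namespace DBSQ

variable {K : Type*} [Field K]

def diagDiff (x : ℤ → ℤ → K) (n m : ℤ) : K := x (n + 1) m - x n (m + 1)

def denom (x y z : ℤ → ℤ → K) (n m : ℤ) : K := x n m * x (n + 2) m - y (n + 2) m - z n m

def cubic (p q : K) (x : ℤ → ℤ → K) (n m : ℤ) : K :=
  diagDiff x n m * diagDiff x (n + 1) m * (x n m - x (n + 2) (m + 1)) + (p - q)

theorem cubic_sub_cubic_succ (p q : K) (x : ℤ → ℤ → K) (n m : ℤ) :
    cubic p q x n m - cubic p q x (n + 1) m =
      (x (n + 3) (m + 1) - x n (m + 1)) * diagDiff x (n + 1) m * diagDiff x (n + 2) m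
        - (x (n + 3) m - x n m) * diagDiff x n m * diagDiff x (n + 1) m := by
  unfold cubic diagDiff
  rw [show n + 1 + 1 = n + 2 by ring, show n + 2 + 1 = n + 3 by ring,
    show n + 1 + 2 = n + 3 by ring]
  ring

theorem div_mul_mul_eq_of_mul_eq {a d₀ d₁ w₀ w₁ c₀ c₁ : K} (hd₀ : d₀ ≠ 0) (hd₁ : d₁ ≠ 0)
    (e₀ : w₀ * d₀ = c₀) (e₁ : w₁ * d₁ = c₁) : a / (d₀ * d₁) * (c₀ * c₁) = a * w₀ * w₁ := by
  subst e₀ e₁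
  field_simp

variable {p q : K} {x y z : ℤ → ℤ → K}

theorem diagDiff_mul_denom
    (hE1 : ∀ n m : ℤ, z (n + 1) m - x n m * x (n + 1) m + y n m = 0)
    (hE2 : ∀ n m : ℤ, z n (m + 1) - x n m * x n (m + 1) + y n m = 0)
    (hE3 : ∀ n m : ℤ, (x n (m + 1) - x (n + 1) m) *
      (z n m - x n m * x (n + 1) (m + 1) + y (n + 1) (m + 1)) - p + q = 0)
    (n m : ℤ) : diagDiff x n m * denom x y z n m = cubic p q x n m := by
  have h1 := hE1 (n + 1) (m + 1)
  have h2 := hE2 (n + 2) m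
  rw [show n + 1 + 1 = n + 2 by ring] at h1
  unfold cubic diagDiff denom
  rw [show n + 1 + 1 = n + 2 by ring]
  linear_combination hE3 n m + (x (n + 1) m - x n (m + 1)) * (h1 - h2)

theorem diagDiff_succ_mul_denom_succ
    (hE1 : ∀ n m : ℤ, z (n + 1) m - x n m * x (n + 1) m + y n m = 0)
    (hE2 : ∀ n m : ℤ, z n (m + 1) - x n m * x n (m + 1) + y n m = 0)
    (hE3 : ∀ n m : ℤ, (x n (m + 1) - x (n + 1) m) *
      (z n m - x n m * x (n + 1) (m + 1) + y (n + 1) (m + 1)) - p + q = 0)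
    (n m : ℤ) : diagDiff x (n + 1) m * denom x y z n (m + 1) = cubic p q x n m := by
  have h3 := hE3 (n + 1) m
  unfold cubic diagDiff denom
  rw [show n + 1 + 1 = n + 2 by ring] at h3 ⊢
  linear_combination h3 + (x (n + 2) m - x (n + 1) (m + 1)) * (hE1 n m - hE2 n m)

end DBSQ

open DBSQ

/-- Second conservation law of the DBSQ equation:
`Δ_m[(x̃̃̃ − x)/((x·x̃̃ − ỹ̃ − z)(x̃·x̃̃̃ − ỹ̃̃ − z̃))]`
`= Δ_n[1/((x̃ − x̂)(x·x̃̃ − ỹ̃ − z))]`. -/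
theorem statement15 {K : Type*} [Field K] (p q : K)
    (x y z : ℤ → ℤ → K)
    (hE1 : ∀ n m : ℤ, z (n + 1) m - x n m * x (n + 1) m + y n m = 0)
    (hE2 : ∀ n m : ℤ, z n (m + 1) - x n m * x n (m + 1) + y n m = 0)
    (hE3 : ∀ n m : ℤ, (x n (m + 1) - x (n + 1) m) *
      (z n m - x n m * x (n + 1) (m + 1) + y (n + 1) (m + 1)) - p + q = 0)
    (hDne : ∀ n m : ℤ, x n m * x (n + 2) m - y (n + 2) m - z n m ≠ 0)
    (hωne : ∀ n m : ℤ, x (n + 1) m - x n (m + 1) ≠ 0)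
    (F J : ℤ → ℤ → K)
    (hF : ∀ n m, F n m = (x (n + 3) m - x n m) /
      ((x n m * x (n + 2) m - y (n + 2) m - z n m) *
        (x (n + 1) m * x (n + 3) m - y (n + 3) m - z (n + 1) m)))
    (hJ : ∀ n m, J n m = 1 /
      ((x (n + 1) m - x n (m + 1)) *
        (x n m * x (n + 2) m - y (n + 2) m - z n m))) :
    ∀ n m : ℤ, F n (m + 1) - F n m = J (n + 1) m - J n m := by
  intro n m
  have hF' : ∀ m, F n m = (x (n + 3) m - x n m) / (denom x y z n m * denom x y z (n + 1) m) := by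
    intro m
    rw [hF, denom, denom, show n + 1 + 2 = n + 3 by ring]
  have e₀ := diagDiff_mul_denom hE1 hE2 hE3 n m
  have e₁ := diagDiff_mul_denom hE1 hE2 hE3 (n + 1) m
  have e₀' := diagDiff_succ_mul_denom_succ hE1 hE2 hE3 n m
  have e₁' := diagDiff_succ_mul_denom_succ hE1 hE2 hE3 (n + 1) m
  rw [show n + 1 + 1 = n + 2 by ring] at e₁'
  have hJ₀ : J n m * cubic p q x n m = 1 := by
    rw [← e₀, hJ]
    exact one_div_mul_cancel (mul_ne_zero (hωne n m) (hDne n m))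
  have hJ₁ : J (n + 1) m * cubic p q x (n + 1) m = 1 := by
    rw [← e₁, hJ]
    exact one_div_mul_cancel (mul_ne_zero (hωne (n + 1) m) (hDne (n + 1) m))
  have hc₀ : cubic p q x n m ≠ 0 := right_ne_zero_of_mul_eq_one hJ₀
  have hc₁ : cubic p q x (n + 1) m ≠ 0 := right_ne_zero_of_mul_eq_one hJ₁
  have hF₀ : F n m * (cubic p q x n m * cubic p q x (n + 1) m) =
      (x (n + 3) m - x n m) * diagDiff x n m * diagDiff x (n + 1) m := by
    rw [hF']
    exact div_mul_mul_eq_of_mul_eq (hDne n m) (hDne (n + 1) m) e₀ e₁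
  have hF₁ : F n (m + 1) * (cubic p q x n m * cubic p q x (n + 1) m) =
      (x (n + 3) (m + 1) - x n (m + 1)) * diagDiff x (n + 1) m * diagDiff x (n + 2) m := by
    rw [hF']
    exact div_mul_mul_eq_of_mul_eq (hDne n (m + 1)) (hDne (n + 1) (m + 1)) e₀' e₁'
  apply mul_right_cancel₀ (mul_ne_zero hc₀ hc₁)
  linear_combination hF₁ - hF₀ - cubic_sub_cubic_succ p q x n m
    - cubic p q x n m * hJ₁ + cubic p q x (n + 1) m * hJ₀
end

section
/- Let K be a field, p, q ∈ K, and let x, y : ℤ×ℤ → K satisfy the lattice nonlinear Schrödinger (lNLS) system ỹ − ŷ − y[(x̃ − x̂)y + p − q] = 0 and x̃ − x̂ + x̃̂·[(x̃ − x̂)y + p − q] = 0 at every (n,m), where x̃̂ = x(n+1,m+1). Assume x̃, x̃̃, 1 + x̃̃·y, and x̂ − x̃ are nowhere zero. Then the conservation law Δ_m ln( −x̃̃/(x̃(1 + x̃̃ y)) ) = Δ_n ln( (x̂ − x̃)/x̃ ) holds in the multiplicative sense: [−x̃̃/(x̃(1 + x̃̃ y))](n,m+1) · [(x̂ − x̃)/x̃](n,m)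 = [−x̃̃/(x̃(1 + x̃̃ y))](n,m) · [(x̂ − x̃)/x̃](n+1,m) for all (n,m). -/
/-!
Write `r = (x̃ − x̂)y + p − q`. The second lNLS equation says `x̂ − x̃ = x̃̂ r`, so
`J = x̃̂ r / x̃` and `J̃ = x̃̃̂ r̃ / x̃̃`. Substituting, the conservation law collapses to the
polynomial identity `r (1 + x̃̃ y) = r̃ (1 + x̃̃̂ ŷ)`, which follows from both lNLS equations.
-/

namespace LatticeNLS

variable {K : Type*} [CommRing K] {p q : K} {x y : ℤ → ℤ → K}

def lnlsFactor (p q : K) (x y : ℤ → ℤ → K) (n m : ℤ) : K :=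
  (x (n + 1) m - x n (m + 1)) * y n m + p - q

lemma sub_eq_mul_lnlsFactor
    (hE2 : ∀ n m : ℤ, x (n + 1) m - x n (m + 1)
      + x (n + 1) (m + 1) * ((x (n + 1) m - x n (m + 1)) * y n m + p - q) = 0)
    (n m : ℤ) :
    x n (m + 1) - x (n + 1) m = x (n + 1) (m + 1) * lnlsFactor p q x y n m := by
  unfold lnlsFactor
  linear_combination -hE2 n m

lemma lnlsFactor_mul_one_add
    (hE1 : ∀ n m : ℤ, y (n + 1) m - y n (m + 1)
      - y n m * ((x (n + 1) m - x n (m + 1)) * y n m + p - q) = 0)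
    (hE2 : ∀ n m : ℤ, x (n + 1) m - x n (m + 1)
      + x (n + 1) (m + 1) * ((x (n + 1) m - x n (m + 1)) * y n m + p - q) = 0)
    (n m : ℤ) :
    lnlsFactor p q x y n m * (1 + x (n + 2) m * y n m)
      = lnlsFactor p q x y (n + 1) m * (1 + x (n + 2) (m + 1) * y n (m + 1)) := by
  have hE2' := hE2 (n + 1) m
  unfold lnlsFactor
  rw [show n + 1 + 1 = n + 2 by ring] at hE2' ⊢
  linear_combination -y n (m + 1) * hE2' + (x (n + 1) (m + 1) - x (n + 2) m) * hE1 n m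
    + y n m * hE2 n m

end LatticeNLS

open LatticeNLS in
theorem statement16_general {K : Type*} [Field K] (p q : K)
    (x y : ℤ → ℤ → K)
    (hE1 : ∀ n m : ℤ, y (n + 1) m - y n (m + 1)
      - y n m * ((x (n + 1) m - x n (m + 1)) * y n m + p - q) = 0)
    (hE2 : ∀ n m : ℤ, x (n + 1) m - x n (m + 1)
      + x (n + 1) (m + 1) * ((x (n + 1) m - x n (m + 1)) * y n m + p - q) = 0)
    (hx1 : ∀ n m : ℤ, x (n + 1) m ≠ 0)
    (hx2 : ∀ n m : ℤ, x (n + 2) m ≠ 0)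
    (hden : ∀ n m : ℤ, 1 + x (n + 2) m * y n m ≠ 0)
    (F J : ℤ → ℤ → K)
    (hF : ∀ n m, F n m = -x (n + 2) m / (x (n + 1) m * (1 + x (n + 2) m * y n m)))
    (hJ : ∀ n m, J n m = (x n (m + 1) - x (n + 1) m) / x (n + 1) m) :
    ∀ n m : ℤ, F n (m + 1) * J n m = F n m * J (n + 1) m := by
  intro n m
  rw [hF, hF, hJ, hJ, sub_eq_mul_lnlsFactor hE2, sub_eq_mul_lnlsFactor hE2,
    show n + 1 + 1 = n + 2 by ring]
  field_simp [hx1 n m, hx1 n (m + 1), hx2 n m, hden n m, hden n (m + 1)]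
  linear_combination -x (n + 2) (m + 1) * lnlsFactor_mul_one_add hE1 hE2 n m

/-- First conservation law of the lattice nonlinear Schrödinger (lNLS) equation, in
multiplicative form: with `F = −x̃̃/(x̃(1 + x̃̃y))` and `J = (x̂ − x̃)/x̃`,
one has `F̂·J = F·J̃`, i.e. `Δ_m ln F = Δ_n ln J`. -/
theorem statement16 {K : Type*} [Field K] (p q : K)
    (x y : ℤ → ℤ → K)
    (hE1 : ∀ n m : ℤ, y (n + 1) m - y n (m + 1)
      - y n m * ((x (n + 1) m - x n (m + 1)) * y n m + p - q) = 0)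
    (hE2 : ∀ n m : ℤ, x (n + 1) m - x n (m + 1)
      + x (n + 1) (m + 1) * ((x (n + 1) m - x n (m + 1)) * y n m + p - q) = 0)
    (hx1 : ∀ n m : ℤ, x (n + 1) m ≠ 0)
    (hx2 : ∀ n m : ℤ, x (n + 2) m ≠ 0)
    (hden : ∀ n m : ℤ, 1 + x (n + 2) m * y n m ≠ 0)
    (hω : ∀ n m : ℤ, x n (m + 1) - x (n + 1) m ≠ 0)
    (F J : ℤ → ℤ → K)
    (hF : ∀ n m, F n m = -x (n + 2) m / (x (n + 1) m * (1 + x (n + 2) m * y n m)))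
    (hJ : ∀ n m, J n m = (x n (m + 1) - x (n + 1) m) / x (n + 1) m) :
    ∀ n m : ℤ, F n (m + 1) * J n m = F n m * J (n + 1) m :=
  statement16_general p q x y hE1 hE2 hx1 hx2 hden F J hF hJ
end

section
/- Let K be a field, p, r ∈ K, and let x, y, φ₁, φ₂ : ℤ → K satisfy for all n (shifts in n: f̃(n) = f(n+1)): φ̃₁ = −φ₁ + x̃·φ₂ and φ̃₂ = y·φ₁ + (r − p − y·x̃)·φ₂, with x̃ and x̃̃ nowhere zero. Then with ε := p − r and B := 1/x̃̃, C := 1/x̃, D := (1 + x̃̃·y)/x̃̃, G := 1/x̃, one has for all n: B·φ̃̃₁ + (ε·C + D)·φ̃₁ + ε·G·φ₁ = 0. -/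
/-!
Shifting the first equation and substituting the second gives
`φ̃̃₁ + φ̃₁ = x̃̃ (y φ₁ - (ε + y x̃) φ₂)`, while the first equation itself says
`x̃ φ₂ = φ̃₁ + φ₁`. Eliminating `φ₂` leaves a denominator-free relation among
`φ₁, φ̃₁, φ̃̃₁`; dividing it by `x̃ x̃̃` gives the stated normalisation.
-/

theorem lax_pair_eliminate_phi_two {K : Type*} [Field K] (p r : K) (x y φ₁ φ₂ : ℤ → K)
    (h1 : ∀ n : ℤ, φ₁ (n + 1) = -φ₁ n + x (n + 1) * φ₂ n)
    (h2 : ∀ n : ℤ, φ₂ (n + 1) = y n * φ₁ n + (r - p - y n * x (n + 1)) * φ₂ n) (n : ℤ) :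
    x (n + 1) * (φ₁ (n + 2) + (1 + x (n + 2) * y n) * φ₁ (n + 1))
      + (p - r) * x (n + 2) * (φ₁ (n + 1) + φ₁ n) = 0 := by
  have h1_succ : φ₁ (n + 2) = -φ₁ (n + 1) + x (n + 2) * φ₂ (n + 1) := by
    simpa only [add_assoc, one_add_one_eq_two] using h1 (n + 1)
  rw [h1_succ, h2 n]
  linear_combination ((p - r) * x (n + 2) + x (n + 1) * x (n + 2) * y n) * h1 n

/-- Scalar second-order reduction of the `n`-part of the lNLS Lax pair (gauge `γ₁ = 1`):
from `φ̃₁ = −φ₁ + x̃φ₂`, `φ̃₂ = yφ₁ + (r − p − yx̃)φ₂`, with `ε = p − r`, `B = 1/x̃̃`,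
`C = 1/x̃`, `D = (1 + x̃̃y)/x̃̃`, `G = 1/x̃`, one has
`B·φ̃̃₁ + (εC + D)·φ̃₁ + εG·φ₁ = 0`. -/
theorem statement19 {K : Type*} [Field K] (p r : K)
    (x y φ₁ φ₂ : ℤ → K)
    (h1 : ∀ n : ℤ, φ₁ (n + 1) = -φ₁ n + x (n + 1) * φ₂ n)
    (h2 : ∀ n : ℤ, φ₂ (n + 1) = y n * φ₁ n + (r - p - y n * x (n + 1)) * φ₂ n)
    (hx1 : ∀ n : ℤ, x (n + 1) ≠ 0)
    (hx2 : ∀ n : ℤ, x (n + 2) ≠ 0)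
    (ε : K) (hε : ε = p - r)
    (B C D G : ℤ → K)
    (hB : ∀ n, B n = 1 / x (n + 2))
    (hC : ∀ n, C n = 1 / x (n + 1))
    (hD : ∀ n, D n = (1 + x (n + 2) * y n) / x (n + 2))
    (hG : ∀ n, G n = 1 / x (n + 1)) :
    ∀ n : ℤ, B n * φ₁ (n + 2) + (ε * C n + D n) * φ₁ (n + 1) + ε * G n * φ₁ n = 0 := by
  intro n
  have hrel := lax_pair_eliminate_phi_two p r x y φ₁ φ₂ h1 h2 n
  have ha := hx1 n
  have hb := hx2 n
  rw [hB, hC, hD, hG, hε]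
  field_simp
  linear_combination hrel
end
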